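/- arXiv:0811.1093 — 5 statements merged into one kernel-verified Lean document; each statement's English description precedes it below -/
import Mathlib

section
/- If a bounded holomorphic function f on the right half-plane H = {z : Re z > 0} satisfies limsup_{Re z → ∞} |f(z)| e^{λ Re z} < ∞ for some λ > 0, and M is the supremum over y ∈ ℝ of the non-tangential boundary values |f*(iy)|, then |f(z)| ≤ M e^{-λ Re z} for all z in H. -/
/-!
Fix `z₀` with `Re z₀ > 0` and pull `g z = f z * exp (λ z)` back to the unit disc by the Möbius map
`w ↦ (z₀ + conj z₀ * w) / (1 - w)`, which sends `0` to `z₀`. The growth hypothesis and the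
boundedness of `f` make the pulled-back function bounded. A radius of the disc ending at a boundary
point `w ≠ 1` is mapped into a Stolz angle at some `i y`, so along it the function tends to
`f*(y) * exp (i λ y)`, of modulus at most `M`. The mean value property on circles of radius
`ρ < 1` and dominated convergence as `ρ → 1` then give `|g z₀| ≤ M`.
-/

open Filter Complex Metric Set Topology ComplexConjugate MeasureTheory

noncomputable def cayley (z₀ w : ℂ) : ℂ := (z₀ + conj z₀ * w) / (1 - w)

lemma cayley_zero (z₀ : ℂ) : cayley z₀ 0 = z₀ := by simp [cayley]

lemma re_cayley (z₀ w : ℂ) :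
    (cayley z₀ w).re = z₀.re * (1 - ‖w‖ ^ 2) / ‖1 - w‖ ^ 2 := by
  simp only [cayley, div_re, ← normSq_eq_norm_sq, normSq_apply, add_re, add_im, mul_re, mul_im,
    conj_re, conj_im, sub_re, sub_im, one_re, one_im]
  ring

lemma cayley_sub_cayley (z₀ : ℂ) {u w : ℂ} (hu : u ≠ 1) (hw : w ≠ 1) :
    cayley z₀ u - cayley z₀ w = 2 * z₀.re * (u - w) / ((1 - u) * (1 - w)) := by
  have : (2 * z₀.re : ℂ) = z₀ + conj z₀ := by rw [add_conj]; push_cast; ring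
  rw [this, cayley, cayley, div_sub_div _ _ (sub_ne_zero.2 hu.symm) (sub_ne_zero.2 hw.symm)]
  ring

lemma re_cayley_pos {z₀ w : ℂ} (hz₀ : 0 < z₀.re) (hw : ‖w‖ < 1) : 0 < (cayley z₀ w).re := by
  have hw1 : 1 - w ≠ 0 := sub_ne_zero.2 (by rintro rfl; simp at hw)
  rw [re_cayley]
  have : ‖w‖ ^ 2 < 1 := by nlinarith [norm_nonneg w]
  have : 0 < ‖1 - w‖ := norm_pos_iff.2 hw1
  have : 0 < 1 - ‖w‖ ^ 2 := by linarith
  positivity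

lemma differentiableAt_cayley (z₀ : ℂ) {w : ℂ} (hw : w ≠ 1) : DifferentiableAt ℂ (cayley z₀) w :=
  (by fun_prop : DifferentiableAt ℂ (fun w => z₀ + conj z₀ * w) w).div (by fun_prop)
    (sub_ne_zero.2 hw.symm)

lemma differentiableOn_cayley (z₀ : ℂ) : DifferentiableOn ℂ (cayley z₀) (ball 0 1) :=
  fun w hw => (differentiableAt_cayley z₀ (by rintro rfl; simp at hw)).differentiableWithinAt

lemma mapsTo_cayley_ball {z₀ : ℂ} (hz₀ : 0 < z₀.re) :
    MapsTo (cayley z₀) (ball 0 1) {z | 0 < z.re} :=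
  fun _ hw => re_cayley_pos hz₀ (mem_ball_zero_iff.1 hw)

lemma DifferentiableOn.comp_cayley {E : Type*} [NormedAddCommGroup E] [NormedSpace ℂ E]
    {f : ℂ → E} (hf : DifferentiableOn ℂ f {z | 0 < z.re}) {z₀ : ℂ} (hz₀ : 0 < z₀.re) :
    DifferentiableOn ℂ (fun w => f (cayley z₀ w)) (ball 0 1) :=
  hf.comp (differentiableOn_cayley z₀) (mapsTo_cayley_ball hz₀)

def nontangentialCone (y κ : ℝ) : Set ℂ := {z | 0 < z.re ∧ ‖z - y * I‖ < κ * z.re}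

lemma im_cayley_mul_I {z₀ w : ℂ} (hw : ‖w‖ = 1) : ((cayley z₀ w).im : ℂ) * I = cayley z₀ w := by
  have : (cayley z₀ w).re = 0 := by simp [re_cayley, hw]
  apply Complex.ext <;> simp [this]

lemma cayley_mul_mem_nontangentialCone {z₀ w : ℂ} (hz₀ : 0 < z₀.re) (hw : ‖w‖ = 1) (hw1 : w ≠ 1)
    {κ ρ : ℝ} (hρ : ρ ∈ Ioo 0 1) (hκρ : 2 * ‖1 - ρ * w‖ < κ * (1 + ρ) * ‖1 - w‖) :
    cayley z₀ (ρ * w) ∈ nontangentialCone (cayley z₀ w).im κ := by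
  obtain ⟨hρ0, hρ1⟩ := hρ
  have hu : ‖(ρ : ℂ) * w‖ = ρ := by simp [hw, hρ0.le]
  have hu1 : (ρ : ℂ) * w ≠ 1 := fun h => hρ1.ne (by simpa [h] using hu.symm)
  have hd : 0 < ‖1 - w‖ := norm_pos_iff.2 (sub_ne_zero.2 hw1.symm)
  have hA : 0 < ‖1 - ρ * w‖ := norm_pos_iff.2 (sub_ne_zero.2 hu1.symm)
  have hdist : ‖cayley z₀ (ρ * w) - cayley z₀ w‖ =
      2 * z₀.re * (1 - ρ) / (‖1 - ρ * w‖ * ‖1 - w‖) := by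
    have : (ρ : ℂ) * w - w = ((ρ - 1 : ℝ) : ℂ) * w := by push_cast; ring
    simp only [cayley_sub_cayley z₀ hu1 hw1, this, norm_div, norm_mul, norm_real, hw, norm_ofNat,
      Real.norm_of_nonneg hz₀.le, Real.norm_of_nonpos (by linarith : ρ - 1 ≤ 0)]
    ring
  refine ⟨re_cayley_pos hz₀ (hu.trans_lt hρ1), ?_⟩
  rw [im_cayley_mul_I hw, hdist, re_cayley, hu, div_lt_iff₀ (by positivity)]
  have hr : 0 < z₀.re * (1 - ρ) / ‖1 - ρ * w‖ := div_pos (mul_pos hz₀ (by linarith)) hA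
  calc 2 * z₀.re * (1 - ρ) = z₀.re * (1 - ρ) / ‖1 - ρ * w‖ * (2 * ‖1 - ρ * w‖) := by
        field_simp
    _ < z₀.re * (1 - ρ) / ‖1 - ρ * w‖ * (κ * (1 + ρ) * ‖1 - w‖) := mul_lt_mul_of_pos_left hκρ hr
    _ = _ := by field_simp; ring

lemma tendsto_cayley_mul_nhdsWithin_nontangentialCone {z₀ w : ℂ} (hz₀ : 0 < z₀.re) (hw : ‖w‖ = 1)
    (hw1 : w ≠ 1) {κ : ℝ} (hκ : 1 < κ) :
    Tendsto (fun ρ : ℝ => cayley z₀ (ρ * w)) (𝓝[<] 1)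
      (𝓝[nontangentialCone (cayley z₀ w).im κ] ((cayley z₀ w).im * I)) := by
  have hcont : Tendsto (fun ρ : ℝ => cayley z₀ (ρ * w)) (𝓝 1) (𝓝 (cayley z₀ w)) := by
    have : ContinuousAt (fun ρ : ℝ => cayley z₀ (ρ * w)) 1 :=
      ContinuousAt.comp (g := cayley z₀) (f := fun ρ : ℝ => (ρ : ℂ) * w) (x := 1)
        (by simpa using (differentiableAt_cayley z₀ hw1).continuousAt) (by fun_prop)
    simpa using this.tendsto
  have hd : 0 < ‖1 - w‖ := norm_pos_iff.2 (sub_ne_zero.2 hw1.symm)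
  have hev : ∀ᶠ ρ : ℝ in 𝓝[<] 1, 2 * ‖1 - ρ * w‖ < κ * (1 + ρ) * ‖1 - w‖ := by
    refine Tendsto.eventually_lt (y := 2 * ‖1 - ((1 : ℝ) : ℂ) * w‖) (z := κ * (1 + 1) * ‖1 - w‖)
      ?_ ?_ (by simp only [ofReal_one, one_mul]; nlinarith)
    · exact ((by fun_prop : Continuous fun ρ : ℝ => 2 * ‖1 - ρ * w‖).tendsto 1).mono_left
        nhdsWithin_le_nhds
    · exact ((by fun_prop : Continuous fun ρ : ℝ => κ * (1 + ρ) * ‖1 - w‖).tendsto 1).mono_left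
        nhdsWithin_le_nhds
  rw [tendsto_nhdsWithin_iff, im_cayley_mul_I hw]
  refine ⟨hcont.mono_left nhdsWithin_le_nhds, ?_⟩
  filter_upwards [hev, Ioo_mem_nhdsLT zero_lt_one] with ρ hκρ hρ
  exact cayley_mul_mem_nontangentialCone hz₀ hw hw1 hρ hκρ

section Disc

open Real

lemma norm_le_circleAverage_of_norm_le {E : Type*} [NormedAddCommGroup E] [NormedSpace ℂ E]
    [CompleteSpace E] {g : ℂ → E} {c : ℂ} {R : ℝ} {G : ℂ → ℝ} (hg : DiffContOnCl ℂ g (ball c |R|))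
    (hG : CircleIntegrable G c R) (hgG : ∀ z ∈ sphere c |R|, ‖g z‖ ≤ G z) :
    ‖g c‖ ≤ circleAverage G c R := by
  rw [← hg.circleAverage, circleAverage_def, circleAverage_def, norm_smul, smul_eq_mul,
    Real.norm_of_nonneg (by positivity)]
  gcongr
  exact intervalIntegral.norm_integral_le_of_norm_le two_pi_pos.le
    (.of_forall fun θ _ => hgG _ (circleMap_mem_sphere' c R θ)) hG

lemma circleMap_zero_mem_ball_one {ρ : ℝ} (hρ : ρ ∈ Ioo 0 1) (θ : ℝ) :
    circleMap 0 ρ θ ∈ ball (0 : ℂ) 1 := by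
  simp [abs_of_pos hρ.1, hρ.2]

lemma tendsto_circleAverage_of_ae_tendsto_radial {G : ℂ → ℝ} {B L : ℝ}
    (hG : ContinuousOn G (ball 0 1)) (hB : ∀ z ∈ ball (0 : ℂ) 1, |G z| ≤ B)
    (hlim : ∀ᵐ θ : ℝ, Tendsto (fun ρ : ℝ => G (ρ * cexp (θ * I))) (𝓝[<] 1) (𝓝 L)) :
    Tendsto (fun ρ => circleAverage G 0 ρ) (𝓝[<] 1) (𝓝 L) := by
  have hL : L = (2 * π)⁻¹ • ∫ _ in 0..2 * π, L := by
    simp [field]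
  rw [hL]
  refine (intervalIntegral.tendsto_integral_filter_of_dominated_convergence (fun _ => B) ?_ ?_
    intervalIntegrable_const ?_).const_smul _
  · filter_upwards [Ioo_mem_nhdsLT zero_lt_one] with ρ hρ
    exact (hG.comp_continuous (continuous_circleMap 0 ρ)
      (circleMap_zero_mem_ball_one hρ)).aestronglyMeasurable
  · filter_upwards [Ioo_mem_nhdsLT zero_lt_one] with ρ hρ
    exact .of_forall fun θ _ => hB _ (circleMap_zero_mem_ball_one hρ θ)
  · filter_upwards [hlim] with θ hθ _
    simpa [circleMap_zero] using hθ

theorem norm_le_of_ae_tendsto_radial {E : Type*} [NormedAddCommGroup E] [NormedSpace ℂ E]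
    [CompleteSpace E] {g : ℂ → E} {B M : ℝ} (hg : DifferentiableOn ℂ g (ball 0 1))
    (hB : ∀ z ∈ ball (0 : ℂ) 1, ‖g z‖ ≤ B)
    (hlim : ∀ᵐ θ : ℝ, ∃ c, ‖c‖ ≤ M ∧ Tendsto (fun ρ : ℝ => g (ρ * cexp (θ * I))) (𝓝[<] 1) (𝓝 c)) :
    ‖g 0‖ ≤ M := by
  -- Truncating `‖g‖` from below at `M` makes its radial limits the constant `M`.
  set G : ℂ → ℝ := fun z => max ‖g z‖ M
  have hG : ContinuousOn G (ball 0 1) := hg.continuousOn.norm.sup continuousOn_const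
  have hmean : ∀ ρ ∈ Ioo (0 : ℝ) 1, ‖g 0‖ ≤ circleAverage G 0 ρ := fun ρ hρ =>
    norm_le_circleAverage_of_norm_le
      (hg.diffContOnCl_ball (closedBall_subset_ball (by rw [abs_of_pos hρ.1]; exact hρ.2)))
      (ContinuousOn.circleIntegrable' (hG.mono fun z hz => by
        rw [mem_ball_zero_iff, mem_sphere_zero_iff_norm.1 hz, abs_of_pos hρ.1]; exact hρ.2))
      fun z _ => le_max_left _ _
  have hGB : ∀ z ∈ ball (0 : ℂ) 1, |G z| ≤ max B M := fun z hz => by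
    rw [abs_of_nonneg ((norm_nonneg _).trans (le_max_left _ _))]
    exact max_le_max (hB z hz) le_rfl
  have hGlim : ∀ᵐ θ : ℝ, Tendsto (fun ρ : ℝ => G (ρ * cexp (θ * I))) (𝓝[<] 1) (𝓝 M) := by
    filter_upwards [hlim] with θ ⟨c, hc, hθ⟩
    simpa [G, max_eq_right hc] using hθ.norm.max (tendsto_const_nhds (x := M))
  exact ge_of_tendsto (tendsto_circleAverage_of_ae_tendsto_radial hG hGB hGlim)
    (eventually_of_mem (Ioo_mem_nhdsLT zero_lt_one) hmean)

end Disc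

lemma nhdsWithin_nontangentialCone_neBot (y : ℝ) {κ : ℝ} (hκ : 1 < κ) :
    (𝓝[nontangentialCone y κ] (y * I)).NeBot := by
  refine mem_closure_iff_nhdsWithin_neBot.1 (Metric.mem_closure_iff.2 fun ε hε => ?_)
  refine ⟨y * I + (ε / 2 : ℝ), ⟨by simpa using hε, ?_⟩, ?_⟩
  · simp [abs_of_pos hε]
    nlinarith
  · simp [abs_of_pos hε]
    linarith

lemma norm_le_of_tendsto_nhdsWithin_nontangentialCone {f : ℂ → ℂ} {C y κ : ℝ} {a : ℂ}
    (hκ : 1 < κ) (hC : ∀ z : ℂ, 0 < z.re → ‖f z‖ ≤ C)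
    (h : Tendsto f (𝓝[nontangentialCone y κ] (y * I)) (𝓝 a)) : ‖a‖ ≤ C :=
  haveI := nhdsWithin_nontangentialCone_neBot y hκ
  le_of_tendsto h.norm (eventually_mem_nhdsWithin.mono fun z hz => hC z hz.1)

lemma exists_norm_mul_exp_le {f : ℂ → ℂ} {lam C₀ C₁ : ℝ} (hlam : 0 ≤ lam)
    (hbdd : ∀ z : ℂ, 0 < z.re → ‖f z‖ ≤ C₀)
    (hlim : ∀ᶠ z in comap re atTop, ‖f z‖ * Real.exp (lam * z.re) ≤ C₁) :
    ∃ B, ∀ z : ℂ, 0 < z.re → ‖f z‖ * Real.exp (lam * z.re) ≤ B := by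
  rw [eventually_comap, eventually_atTop] at hlim
  obtain ⟨R, hR⟩ := hlim
  refine ⟨max C₁ (C₀ * Real.exp (lam * R)), fun z hz => ?_⟩
  rcases le_total R z.re with h | h
  · exact (hR _ h z rfl).trans (le_max_left _ _)
  · refine le_trans ?_ (le_max_right _ _)
    exact mul_le_mul (hbdd z hz) (Real.exp_le_exp.2 (mul_le_mul_of_nonneg_left h hlam))
      (Real.exp_pos _).le ((norm_nonneg _).trans (hbdd z hz))

lemma ae_exp_ofReal_mul_I_ne_one : ∀ᵐ θ : ℝ, cexp (θ * I) ≠ 1 := by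
  refine measure_mono_null (t := range fun n : ℤ => (n : ℝ) * (2 * Real.pi)) (fun θ hθ => ?_)
    ((countable_range _).measure_zero _)
  obtain ⟨n, hn⟩ := exp_eq_one_iff.1 (not_not.1 hθ)
  exact ⟨n, by simpa using (congr_arg im hn).symm⟩

lemma norm_mul_exp_ofReal_mul (a : ℂ) (lam : ℝ) (z : ℂ) :
    ‖a * cexp (lam * z)‖ = ‖a‖ * Real.exp (lam * z.re) := by
  rw [norm_mul, norm_exp, re_ofReal_mul]

/-- **Phragmén–Lindelöf type maximum principle on the right half-plane.**
If a bounded holomorphic function `f` on `H = {Re z > 0}` satisfies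
`limsup_{Re z → ∞} |f(z)| e^{λ Re z} < ∞` for some `λ > 0`, and `fstar y` denotes the
non-tangential boundary value of `f` at `i y`, then `|f z| ≤ (⨆ y, |fstar y|) e^{-λ Re z}`
on `H`. -/
theorem stmt_0 (f : ℂ → ℂ) (lam : ℝ) (fstar : ℝ → ℂ)
    (hf : DifferentiableOn ℂ f {z : ℂ | 0 < z.re})
    (hbdd : ∃ C : ℝ, ∀ z : ℂ, 0 < z.re → ‖f z‖ ≤ C)
    (hlam : 0 < lam)
    (hlimsup : ∃ C : ℝ, ∀ᶠ z : ℂ in Filter.comap Complex.re Filter.atTop,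
      ‖f z‖ * Real.exp (lam * z.re) ≤ C)
    (hstar : ∀ y : ℝ, ∀ κ : ℝ, 1 < κ →
      Filter.Tendsto f
        (nhdsWithin ((y : ℂ) * Complex.I)
          {z : ℂ | 0 < z.re ∧ ‖z - (y : ℂ) * Complex.I‖ < κ * z.re})
        (nhds (fstar y))) :
    ∀ z : ℂ, 0 < z.re →
      ‖f z‖ ≤ (⨆ y : ℝ, ‖fstar y‖) * Real.exp (-lam * z.re) := by
  intro z hz
  obtain ⟨C₀, hC₀⟩ := hbdd
  obtain ⟨C₁, hC₁⟩ := hlimsup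
  obtain ⟨B, hB⟩ := exists_norm_mul_exp_le hlam.le hC₀ hC₁
  have hM (y : ℝ) : ‖fstar y‖ ≤ ⨆ y, ‖fstar y‖ := le_ciSup ⟨C₀, forall_mem_range.2 fun y =>
    norm_le_of_tendsto_nhdsWithin_nontangentialCone one_lt_two hC₀ (hstar y 2 one_lt_two)⟩ y
  have hg0 := norm_le_of_ae_tendsto_radial (g := fun w => f (cayley z w) * cexp (lam * cayley z w))
    (B := B) (M := ⨆ y, ‖fstar y‖)
    ((hf.comp_cayley hz).mul ((differentiableOn_cayley z).const_mul _).cexp)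
    (fun w hw => (norm_mul_exp_ofReal_mul _ _ _).trans_le (hB _ (mapsTo_cayley_ball hz hw))) ?_
  · rw [cayley_zero, norm_mul_exp_ofReal_mul] at hg0
    rwa [neg_mul, Real.exp_neg, ← div_eq_mul_inv, le_div_iff₀ (Real.exp_pos _)]
  · filter_upwards [ae_exp_ofReal_mul_I_ne_one] with θ hθ
    have hw : ‖cexp (θ * I)‖ = 1 := norm_exp_ofReal_mul_I θ
    have hcone := tendsto_cayley_mul_nhdsWithin_nontangentialCone hz hw hθ one_lt_two
    refine ⟨_, ?_, ((hstar _ 2 one_lt_two).comp hcone).mul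
      (((by fun_prop : Continuous fun u : ℂ => cexp (lam * u)).tendsto _).comp
        (hcone.mono_right nhdsWithin_le_nhds))⟩
    rw [norm_mul_exp_ofReal_mul]
    simpa using hM _
end

section
/- Let 0 = λ₀ < λ₁ < λ₂ < ⋯ be a strictly increasing sequence tending to infinity. A function f on the right half-plane has at most one asymptotic expansion: if ∑_j ∑_{k=0}^{n_j} p_{jk} e^{-μ_{jk} z - ν_{jk} z̄} and ∑_j ∑_{k=0}^{m_j} q_{jk} e^{-α_{jk} z - β_{jk} z̄} are both asymptotic expansions of f (with respect to possibly different increasing sequences of levels), then all their nonzero terms coincide. -/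
open Filter Complex

/-- The partial sum up to level `N` of a formal series
`∑_j ∑_{k=0}^{n j} p j k · e^{-μ j k · z - ν j k · conj z}`. -/
noncomputable def partialSumAE (n : ℕ → ℕ) (μ ν : ℕ → ℕ → ℝ) (p : ℕ → ℕ → ℂ)
    (N : ℕ) (z : ℂ) : ℂ :=
  ∑ j ∈ Finset.range (N + 1), ∑ k ∈ Finset.range (n j + 1),
    p j k * Complex.exp (-(μ j k : ℂ) * z - (ν j k : ℂ) * (starRingEnd ℂ z))

/-- `∑_j ∑_{k=0}^{n j} p j k e^{-μ j k z - ν j k z̄}` is an asymptotic expansion of `f`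
on the right half-plane, with strictly increasing levels `lam j → ∞`, `lam 0 = 0`,
`μ j k + ν j k = lam j`, `μ j k, ν j k ≥ 0`. -/
def IsAsymptoticExpansion (f : ℂ → ℂ) (lam : ℕ → ℝ) (n : ℕ → ℕ)
    (μ ν : ℕ → ℕ → ℝ) (p : ℕ → ℕ → ℂ) : Prop :=
  lam 0 = 0 ∧ StrictMono lam ∧ Filter.Tendsto lam Filter.atTop Filter.atTop ∧
    (∀ j k, k ≤ n j → 0 ≤ μ j k ∧ 0 ≤ ν j k ∧ μ j k + ν j k = lam j) ∧
    ∀ N : ℕ, Filter.Tendsto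
      (fun z : ℂ => ‖f z - partialSumAE n μ ν p N z‖ * Real.exp (lam N * z.re))
      (Filter.comap Complex.re Filter.atTop) (nhds 0)

/-! Truncating the two expansions at levels `lam j ≤ gam M` and subtracting gives a finite
exponential sum `∑ d(a,b) e^{-a z - b z̄}` that is `o(e^{-lam j · Re z})`. Such a sum has no
terms of level `a + b ≤ lam j`: if `L` is its lowest level, then on a horizontal line
`z = x + i y` the product `e^{L x} · (sum)` tends to the trigonometric polynomial
`∑_{a+b=L} d(a,b) e^{i(b-a)y}`, which must vanish identically; pairs on one level have distinct
frequencies `b - a`, so Dedekind's independence of characters kills their coefficients, and we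
induct on the number of terms. Within one expansion an exponent pair determines its term (levels
are strictly increasing, pairs within a level distinct), so equal coefficients mean equal terms. -/

open Finset Topology

noncomputable def expTerm (e : ℝ × ℝ) (z : ℂ) : ℂ :=
  cexp (-(e.1 : ℂ) * z - (e.2 : ℂ) * starRingEnd ℂ z)

/-- `g z = o(e^{-r Re z})` as `Re z → ∞`. -/
def IsLittleOExp (g : ℂ → ℂ) (r : ℝ) : Prop :=
  Tendsto (fun z => ‖g z‖ * Real.exp (r * z.re)) (comap re atTop) (𝓝 0)

namespace IsLittleOExp

variable {g g₁ g₂ : ℂ → ℂ} {r r' : ℝ}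

theorem mono (h : IsLittleOExp g r) (hr : r' ≤ r) : IsLittleOExp g r' := by
  unfold IsLittleOExp at *
  refine squeeze_zero' (.of_forall fun z => by positivity) ?_ h
  filter_upwards [tendsto_comap.eventually (eventually_ge_atTop 0)] with z hz
  gcongr

theorem sub (h₁ : IsLittleOExp g₁ r) (h₂ : IsLittleOExp g₂ r) :
    IsLittleOExp (fun z => g₁ z - g₂ z) r := by
  unfold IsLittleOExp at *
  refine squeeze_zero (fun z => by positivity) (fun z => ?_) (by simpa using h₁.add h₂)
  rw [← add_mul]
  gcongr
  exact norm_sub_le _ _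

theorem tendsto_mul_cexp_line (h : IsLittleOExp g r) (y : ℝ) :
    Tendsto (fun x : ℝ => g (x + y * I) * cexp (r * x)) atTop (𝓝 0) := by
  have hline : Tendsto (fun x : ℝ => (x : ℂ) + y * I) atTop (comap re atTop) :=
    tendsto_comap_iff.2 (tendsto_id.congr fun x => by simp)
  rw [tendsto_zero_iff_norm_tendsto_zero]
  refine (h.comp hline).congr fun x => ?_
  simp [Complex.norm_exp]

end IsLittleOExp

theorem expTerm_line_mul_cexp (e : ℝ × ℝ) (L x y : ℝ) :
    expTerm e (x + y * I) * cexp (L * x) =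
      cexp ((L - (e.1 + e.2) : ℝ) * x) * cexp ((e.2 - e.1 : ℝ) * y * I) := by
  rw [expTerm, ← exp_add, ← exp_add]
  congr 1
  simp only [map_add, map_mul, conj_ofReal, conj_I, ofReal_sub, ofReal_add]
  ring

theorem tendsto_cexp_mul_ofReal_of_neg {a : ℝ} (ha : a < 0) :
    Tendsto (fun x : ℝ => cexp (a * x)) atTop (𝓝 0) := by
  refine tendsto_exp_comap_re_atBot.comp (tendsto_comap_iff.2 ?_)
  simpa [Function.comp_def] using tendsto_id.const_mul_atTop_of_neg ha

theorem tendsto_sum_expTerm_line {t : Finset (ℝ × ℝ)} {L : ℝ} (hL : ∀ e ∈ t, L ≤ e.1 + e.2)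
    (c : ℝ × ℝ → ℂ) (y : ℝ) :
    Tendsto (fun x : ℝ => (∑ e ∈ t, c e * expTerm e (x + y * I)) * cexp (L * x)) atTop
      (𝓝 (∑ e ∈ t with e.1 + e.2 = L, c e * cexp ((e.2 - e.1 : ℝ) * y * I))) := by
  simp_rw [sum_mul, mul_assoc, expTerm_line_mul_cexp, sum_filter]
  refine tendsto_finsetSum _ fun e he => ?_
  split_ifs with heL
  · simp [heL, mul_assoc]
  · have hneg : L - (e.1 + e.2) < 0 := sub_neg.2 (lt_of_le_of_ne (hL e he) (Ne.symm heL))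
    simpa using ((tendsto_cexp_mul_ofReal_of_neg hneg).mul_const _).const_mul (c e)

@[simps]
noncomputable def cexpMulIHom (θ : ℝ) : Multiplicative ℝ →* ℂ where
  toFun y := cexp (θ * y.toAdd * I)
  map_one' := by simp
  map_mul' y y' := by simp [mul_add, add_mul, exp_add]

theorem cexpMulIHom_injective : Function.Injective cexpMulIHom := by
  intro θ θ' h
  by_contra hne
  have hsub : (θ : ℂ) - θ' ≠ 0 := by exact_mod_cast sub_ne_zero.2 hne
  have hy := DFunLike.congr_fun h (Multiplicative.ofAdd (Real.pi / (θ - θ')))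
  simp only [cexpMulIHom_apply, toAdd_ofAdd] at hy
  -- at `y = π / (θ - θ')` the two characters differ by the factor `e^{iπ} = -1`
  have hshift : cexp (θ * ↑(Real.pi / (θ - θ')) * I) =
      cexp (θ' * ↑(Real.pi / (θ - θ')) * I) * cexp (Real.pi * I) := by
    rw [← exp_add]
    congr 1
    push_cast
    field_simp
    ring
  rw [hy, exp_pi_mul_I] at hshift
  exact exp_ne_zero _ (by linear_combination hshift / 2)

theorem eq_zero_of_forall_sum_cexp_mul_I_eq_zero {u : Finset ℝ} {d : ℝ → ℂ}
    (h : ∀ y : ℝ, ∑ θ ∈ u, d θ * cexp (θ * y * I) = 0) : ∀ θ ∈ u, d θ = 0 := by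
  have hli := (linearIndependent_monoidHom (Multiplicative ℝ) ℂ).comp _
    cexpMulIHom_injective
  refine linearIndependent_iff'.1 hli u d (funext fun y => ?_)
  simpa using h (Multiplicative.toAdd y)

theorem eq_zero_of_isLittleOExp_sum_expTerm {t : Finset (ℝ × ℝ)} {c : ℝ × ℝ → ℂ} {r : ℝ}
    (h : IsLittleOExp (fun z => ∑ e ∈ t, c e * expTerm e z) r) :
    ∀ e ∈ t, e.1 + e.2 ≤ r → c e = 0 := by
  induction t using Finset.strongInduction with
  | _ t ih =>
  rcases t.eq_empty_or_nonempty with rfl | hne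
  · simp
  obtain ⟨e₀, he₀, hmin⟩ := t.exists_min_image (fun e => e.1 + e.2) hne
  set L := e₀.1 + e₀.2
  by_cases hrL : r < L
  · exact fun e he her => absurd (hmin e he) (by linarith)
  -- On the lowest level `L` the terms are separated by their frequency `e.2 - e.1`.
  have hlead : ∀ e ∈ t, e.1 + e.2 = L → c e = 0 := by
    set t₀ := t.filter fun e => e.1 + e.2 = L
    have hinv : ∀ e ∈ t₀, ((L - (e.2 - e.1)) / 2, (L + (e.2 - e.1)) / 2) = e := by
      intro e he
      have := (mem_filter.1 he).2
      ext <;> simp only <;> linarith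
    have hinj : Set.InjOn (fun e : ℝ × ℝ => e.2 - e.1) t₀ := fun e he e' he' hee' => by
      rw [← hinv e he, ← hinv e' he']
      simp only at hee'
      rw [hee']
    have htrig : ∀ y : ℝ, ∑ θ ∈ t₀.image (fun e => e.2 - e.1),
        c ((L - θ) / 2, (L + θ) / 2) * cexp (θ * y * I) = 0 := by
      intro y
      rw [sum_image hinj]
      refine (sum_congr rfl fun e he => by rw [hinv e he]).trans ?_
      exact tendsto_nhds_unique (tendsto_sum_expTerm_line hmin c y)
        ((h.mono (not_lt.1 hrL)).tendsto_mul_cexp_line y)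
    intro e he heL
    rw [← hinv e (mem_filter.2 ⟨he, heL⟩)]
    exact eq_zero_of_forall_sum_cexp_mul_I_eq_zero htrig _
      (mem_image_of_mem _ (mem_filter.2 ⟨he, heL⟩))
  have hrest : IsLittleOExp
      (fun z => ∑ e ∈ t with e.1 + e.2 ≠ L, c e * expTerm e z) r := by
    convert h using 2 with z
    exact sum_filter_of_ne fun e he hce heL => left_ne_zero_of_mul hce (hlead e he heL)
  intro e he her
  by_cases heL : e.1 + e.2 = L
  · exact hlead e he heL
  · exact ih _ (filter_ssubset.2 ⟨e₀, he₀, not_not.2 rfl⟩) hrest e (mem_filter.2 ⟨he, heL⟩) her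

theorem sum_expTerm_fiberwise {ι : Type*} {s : Finset ι} {t : Finset (ℝ × ℝ)} {e : ι → ℝ × ℝ}
    (hst : ∀ i ∈ s, e i ∈ t) (c : ι → ℂ) (z : ℂ) :
    ∑ A ∈ t, (∑ i ∈ s with e i = A, c i) * expTerm A z = ∑ i ∈ s, c i * expTerm (e i) z := by
  rw [← sum_fiberwise_of_maps_to hst]
  refine sum_congr rfl fun A _ => ?_
  rw [sum_mul]
  exact sum_congr rfl fun i hi => by rw [(mem_filter.1 hi).2]

theorem sum_filter_eq_of_isLittleOExp_sub {ι κ : Type*} {s : Finset ι} {s' : Finset κ}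
    {e : ι → ℝ × ℝ} {e' : κ → ℝ × ℝ} {c : ι → ℂ} {c' : κ → ℂ} {r : ℝ}
    (h : IsLittleOExp (fun z => ∑ i ∈ s, c i * expTerm (e i) z -
      ∑ i ∈ s', c' i * expTerm (e' i) z) r)
    {A : ℝ × ℝ} (hA : A.1 + A.2 ≤ r) :
    ∑ i ∈ s with e i = A, c i = ∑ i ∈ s' with e' i = A, c' i := by
  classical
  set t := insert A (s.image e ∪ s'.image e')
  have hdiff : IsLittleOExp (fun z => ∑ B ∈ t,
      ((∑ i ∈ s with e i = B, c i) - ∑ i ∈ s' with e' i = B, c' i) * expTerm B z) r := by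
    convert h using 2 with z
    simp only [sub_mul, sum_sub_distrib]
    rw [sum_expTerm_fiberwise fun i hi => mem_insert_of_mem (mem_union_left _ (mem_image_of_mem e hi)),
      sum_expTerm_fiberwise fun i hi => mem_insert_of_mem (mem_union_right _ (mem_image_of_mem e' hi))]
  exact sub_eq_zero.1 (eq_zero_of_isLittleOExp_sum_expTerm hdiff A (mem_insert_self _ _) hA)

theorem partialSumAE_eq_sum_sigma (n : ℕ → ℕ) (μ ν : ℕ → ℕ → ℝ) (p : ℕ → ℕ → ℂ)
    (N : ℕ) (z : ℂ) :
    partialSumAE n μ ν p N z = ∑ i ∈ (range (N + 1)).sigma fun j => range (n j + 1),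
      p i.1 i.2 * expTerm (μ i.1 i.2, ν i.1 i.2) z := by
  rw [partialSumAE, sum_sigma]
  rfl

theorem injOn_exponents {lam : ℕ → ℝ} {n : ℕ → ℕ} {μ ν : ℕ → ℕ → ℝ}
    (hlev : ∀ j k, k ≤ n j → μ j k + ν j k = lam j) (hlam : Function.Injective lam)
    (hinj : ∀ j, Set.InjOn (fun k => (μ j k, ν j k)) {k | k ≤ n j}) :
    Set.InjOn (fun i : (_ : ℕ) × ℕ => (μ i.1 i.2, ν i.1 i.2)) {i | i.2 ≤ n i.1} := by
  rintro ⟨j, k⟩ hk ⟨j', k'⟩ hk' hjk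
  simp only [Prod.mk.injEq] at hjk
  obtain rfl : j = j' := hlam (by rw [← hlev j k hk, ← hlev j' k' hk', hjk.1, hjk.2])
  obtain rfl : k = k' := hinj j hk hk' (Prod.ext hjk.1 hjk.2)
  rfl

theorem sum_filter_apply_eq_of_injOn {ι β : Type*} [DecidableEq β] {s : Finset ι} {e : ι → β}
    (he : Set.InjOn e s) {i : ι} (hi : i ∈ s) (c : ι → ℂ) :
    ∑ i' ∈ s with e i' = e i, c i' = c i := by
  refine sum_eq_single_of_mem i (mem_filter.2 ⟨hi, rfl⟩) fun i' hi' hne => ?_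
  exact absurd (he (mem_filter.1 hi').1 hi (mem_filter.1 hi').2) hne

theorem exists_eq_term_of_isAsymptoticExpansion {f : ℂ → ℂ}
    {lam : ℕ → ℝ} {n : ℕ → ℕ} {μ ν : ℕ → ℕ → ℝ} {p : ℕ → ℕ → ℂ}
    {gam : ℕ → ℝ} {m : ℕ → ℕ} {α β : ℕ → ℕ → ℝ} {q : ℕ → ℕ → ℂ}
    (h₁ : IsAsymptoticExpansion f lam n μ ν p) (h₂ : IsAsymptoticExpansion f gam m α β q)
    (hinj₁ : ∀ j, Set.InjOn (fun k => (μ j k, ν j k)) {k | k ≤ n j})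
    (hinj₂ : ∀ j, Set.InjOn (fun k => (α j k, β j k)) {k | k ≤ m j})
    {j k : ℕ} (hk : k ≤ n j) (hp : p j k ≠ 0) :
    ∃ j' k', k' ≤ m j' ∧ q j' k' = p j k ∧ α j' k' = μ j k ∧ β j' k' = ν j k := by
  obtain ⟨-, hlam, -, hμν, hf₁⟩ := h₁
  obtain ⟨-, hgam, hgam_top, hαβ, hf₂⟩ := h₂
  obtain ⟨M, hM⟩ := (hgam_top.eventually_ge_atTop (lam j)).exists
  have hf₁' : IsLittleOExp (fun z => f z - partialSumAE n μ ν p j z) (lam j) := hf₁ j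
  have hf₂' : IsLittleOExp (fun z => f z - partialSumAE m α β q M z) (gam M) := hf₂ M
  have hcoeff := sum_filter_eq_of_isLittleOExp_sub
    (by simpa only [sub_sub_sub_cancel_left, partialSumAE_eq_sum_sigma]
      using (hf₂'.mono hM).sub hf₁') (A := (μ j k, ν j k)) (hμν j k hk).2.2.le
  have hinjOn₁ := injOn_exponents (fun j k hk => (hμν j k hk).2.2) hlam.injective hinj₁
  have hinjOn₂ := injOn_exponents (fun j k hk => (hαβ j k hk).2.2) hgam.injective hinj₂
  rw [sum_filter_apply_eq_of_injOn (i := ⟨j, k⟩) (hinjOn₁.mono fun i hi => mem_range_succ_iff.1 (mem_sigma.1 hi).2)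
    (mem_sigma.2 ⟨self_mem_range_succ j, mem_range_succ_iff.2 hk⟩)] at hcoeff
  obtain ⟨⟨j', k'⟩, hi'⟩ := nonempty_of_sum_ne_zero (hcoeff ▸ hp)
  obtain ⟨hjk', hαβ'⟩ := mem_filter.1 hi'
  simp only [Prod.mk.injEq] at hαβ'
  have hk' : k' ≤ m j' := mem_range_succ_iff.1 (mem_sigma.1 hjk').2
  refine ⟨j', k', hk', ?_, hαβ'⟩
  have hq_eq := sum_filter_apply_eq_of_injOn
    (hinjOn₂.mono fun i hi => mem_range_succ_iff.1 (mem_sigma.1 hi).2) hjk' fun i => q i.1 i.2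
  rw [hαβ'.1, hαβ'.2] at hq_eq
  exact hq_eq.symm.trans hcoeff.symm

/-- **Uniqueness of asymptotic expansions.** If `f` has two asymptotic expansions (with
possibly different level sequences), in each of which the exponent pairs within a level
are pairwise distinct, then all their nonzero terms coincide: every nonzero term
`p j k · e^{-μ j k z - ν j k z̄}` of the first expansion appears in the second, and
vice versa. -/
theorem stmt_1 (f : ℂ → ℂ)
    (lam : ℕ → ℝ) (n : ℕ → ℕ) (μ ν : ℕ → ℕ → ℝ) (p : ℕ → ℕ → ℂ)
    (gam : ℕ → ℝ) (m : ℕ → ℕ) (α β : ℕ → ℕ → ℝ) (q : ℕ → ℕ → ℂ)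
    (h₁ : IsAsymptoticExpansion f lam n μ ν p)
    (h₂ : IsAsymptoticExpansion f gam m α β q)
    (hinj₁ : ∀ j, Set.InjOn (fun k => (μ j k, ν j k)) {k | k ≤ n j})
    (hinj₂ : ∀ j, Set.InjOn (fun k => (α j k, β j k)) {k | k ≤ m j}) :
    (∀ j k, k ≤ n j → p j k ≠ 0 →
      ∃ j' k', k' ≤ m j' ∧ q j' k' = p j k ∧ α j' k' = μ j k ∧ β j' k' = ν j k) ∧
    (∀ j' k', k' ≤ m j' → q j' k' ≠ 0 →
      ∃ j k, k ≤ n j ∧ p j k = q j' k' ∧ μ j k = α j' k' ∧ ν j k = β j' k') :=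
  ⟨fun _ _ hk hp => exists_eq_term_of_isAsymptoticExpansion h₁ h₂ hinj₁ hinj₂ hk hp,
    fun _ _ hk hq => exists_eq_term_of_isAsymptoticExpansion h₂ h₁ hinj₂ hinj₁ hk hq⟩
end

section
/- If a holomorphic function on the right half-plane H has an asymptotic expansion ∑_j ∑_k p_{jk} e^{-μ_{jk} z - ν_{jk} z̄}, then every term with a nonzero coefficient has ν_{jk} = 0; i.e., the expansion contains no genuinely anti-holomorphic exponentials. -/
/-! Induct on the level `j`. Once all lower levels are known to be holomorphic,
`g z = (f z - lower levels) · e^{λ_j z}` is holomorphic on the half-plane, and since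
`e^{-μ z - ν z̄} e^{(μ + ν) z} = e^{2 i ν Im z}` it differs by `o(1)`, as `Re z → ∞`, from the
trigonometric polynomial `H y = ∑_k p_{jk} e^{2 i ν_{jk} y}` evaluated at `y = Im z`. So `g` is
bounded far to the right, the Cauchy estimates give `g' = O(1 / Re z)`, and `g (x + i y) - g x → 0`:
`H` is constant. Averaging `H y · e^{-2 i ν_{jk} y}` over `[0, T]` then forces `p_{jk} = 0`
unless `ν_{jk} = 0`. -/

open Filter Complex

open Finset Topology Metric

theorem tendsto_integral_exp_mul_I_div (c : ℝ) :
    Tendsto (fun T : ℝ => (∫ y in (0 : ℝ)..T, exp (c * y * I)) / T) atTop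
      (𝓝 (if c = 0 then 1 else 0)) := by
  by_cases hc : c = 0
  · simp only [hc, if_true, ofReal_zero, zero_mul, exp_zero, intervalIntegral.integral_const,
      sub_zero, real_smul, mul_one]
    refine tendsto_const_nhds.congr' ?_
    filter_upwards [eventually_ne_atTop 0] with T hT
    exact (div_self (ofReal_ne_zero.mpr hT)).symm
  · rw [if_neg hc]
    have hcI : (c : ℂ) * I ≠ 0 := mul_ne_zero (ofReal_ne_zero.mpr hc) I_ne_zero
    have hbound : ∀ T : ℝ, 0 < T →
        ‖(∫ y in (0 : ℝ)..T, exp (c * y * I)) / T‖ ≤ 2 / |c| / T := by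
      intro T hT
      have hunit : ∀ s : ℝ, ‖exp (c * s * I)‖ = 1 := fun s => by
        rw [← ofReal_mul, norm_exp_ofReal_mul_I]
      simp_rw [mul_right_comm _ _ I]
      rw [integral_exp_mul_complex hcI, norm_div, norm_div, norm_real,
        Real.norm_of_nonneg hT.le, norm_mul, norm_I, mul_one, norm_real, Real.norm_eq_abs]
      gcongr
      calc _ ≤ ‖exp (c * I * T)‖ + ‖exp (c * I * ((0 : ℝ) : ℂ))‖ := norm_sub_le _ _
        _ = 2 := by simp_rw [mul_right_comm _ I, hunit]; norm_num
    refine squeeze_zero_norm' ?_ ((tendsto_const_nhds (x := 2 / |c|)).div_atTop tendsto_id)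
    filter_upwards [eventually_gt_atTop 0] with T hT using hbound T hT

theorem tendsto_integral_sum_mul_exp_div {ι : Type*} (s : Finset ι) (a : ι → ℂ) (c : ι → ℝ) :
    Tendsto (fun T : ℝ => (∫ y in (0 : ℝ)..T, ∑ l ∈ s, a l * exp (c l * y * I)) / T) atTop
      (𝓝 (∑ l ∈ s with c l = 0, a l)) := by
  have hmean : ∀ T : ℝ, (∫ y in (0 : ℝ)..T, ∑ l ∈ s, a l * exp (c l * y * I)) / T
      = ∑ l ∈ s, a l * ((∫ y in (0 : ℝ)..T, exp (c l * y * I)) / T) := fun T => by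
    rw [intervalIntegral.integral_finsetSum fun l _ => by
      apply Continuous.intervalIntegrable; fun_prop]
    simp only [intervalIntegral.integral_const_mul, sum_div, mul_div_assoc]
  simp_rw [hmean, sum_filter]
  convert tendsto_finsetSum s fun l _ =>
    (tendsto_integral_exp_mul_I_div (c l)).const_mul (a l) using 2
  simp only [mul_ite, mul_one, mul_zero]

theorem sum_filter_eq_zero_of_forall_sum_mul_exp_eq {ι : Type*} (s : Finset ι) (a : ι → ℂ)
    (c : ι → ℝ) (K : ℂ) (hK : ∀ y : ℝ, ∑ l ∈ s, a l * exp (c l * y * I) = K) {c₀ : ℝ}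
    (hc₀ : c₀ ≠ 0) : ∑ l ∈ s with c l = c₀, a l = 0 := by
  have hshift : ∀ y : ℝ,
      ∑ l ∈ s, a l * exp (↑(c l - c₀) * y * I) = K * exp (↑(-c₀) * y * I) := fun y => by
    simp_rw [← hK y, sum_mul, mul_assoc, ← exp_add]
    congr! 3
    push_cast
    ring
  have hlim := tendsto_integral_sum_mul_exp_div s a (fun l => c l - c₀)
  simp_rw [hshift, intervalIntegral.integral_const_mul, mul_div_assoc, sub_eq_zero] at hlim
  have hzero := (tendsto_integral_exp_mul_I_div (-c₀)).const_mul K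
  rw [if_neg (neg_ne_zero.mpr hc₀), mul_zero] at hzero
  exact tendsto_nhds_unique hlim hzero

theorem norm_sum_mul_exp_le {ι : Type*} (s : Finset ι) (a : ι → ℂ) (c : ι → ℝ) (y : ℝ) :
    ‖∑ l ∈ s, a l * exp (c l * y * I)‖ ≤ ∑ l ∈ s, ‖a l‖ := by
  refine (norm_sum_le _ _).trans (sum_le_sum fun l _ => ?_)
  rw [norm_mul, ← ofReal_mul, norm_exp_ofReal_mul_I, mul_one]

theorem norm_deriv_le_of_forall_re_gt {g : ℂ → ℂ} {a M : ℝ}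
    (hg : DifferentiableOn ℂ g {w | a < w.re}) (hM : ∀ w : ℂ, a < w.re → ‖g w‖ ≤ M)
    {z : ℂ} (hz : a < z.re) : ‖deriv g z‖ ≤ 2 * M / (z.re - a) := by
  have hR : 0 < (z.re - a) / 2 := by linarith
  have hball : closedBall z ((z.re - a) / 2) ⊆ {w | a < w.re} := fun w hw => by
    have hre : |(w - z).re| ≤ (z.re - a) / 2 :=
      (abs_re_le_norm _).trans (by rwa [mem_closedBall, dist_eq_norm] at hw)
    rw [sub_re, abs_le] at hre
    show a < w.re
    linarith
  calc ‖deriv g z‖ ≤ M / ((z.re - a) / 2) :=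
        norm_deriv_le_of_forall_mem_sphere_norm_le hR (hg.diffContOnCl_ball hball)
          fun w hw => hM w (hball (sphere_subset_closedBall hw))
    _ = 2 * M / (z.re - a) := by field_simp

theorem tendsto_sub_vertical_shift_of_bounded {g : ℂ → ℂ} {a M : ℝ}
    (hg : DifferentiableOn ℂ g {w | a < w.re}) (hM : ∀ w : ℂ, a < w.re → ‖g w‖ ≤ M)
    (y : ℝ) : Tendsto (fun x : ℝ => g (x + y * I) - g x) atTop (𝓝 0) := by
  have hopen : IsOpen {w : ℂ | a < w.re} := isOpen_lt continuous_const continuous_re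
  have hM0 : 0 ≤ M := (norm_nonneg _).trans (hM (a + 1) (by simp))
  have hbound : ∀ x : ℝ, a < x → ‖g (x + y * I) - g x‖ ≤ 2 * M / (x - a) * |y| := by
    intro x hx
    have hS : ∀ w ∈ {w : ℂ | x ≤ w.re}, a < w.re := fun w hw => hx.trans_le hw
    have hmvt := (convex_halfSpace_re_ge x).norm_image_sub_le_of_norm_deriv_le
      (fun w hw => hg.differentiableAt (hopen.mem_nhds (hS w hw)))
      (fun w hw => (norm_deriv_le_of_forall_re_gt hg hM (hS w hw)).trans
        (div_le_div_of_nonneg_left (by positivity) (sub_pos.mpr hx) (sub_le_sub_right hw a)))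
      (x := (x : ℂ)) (y := x + y * I) (by simp) (by simp)
    simpa [norm_mul, norm_I, norm_real] using hmvt
  have hdecay : Tendsto (fun x : ℝ => 2 * M / (x - a) * |y|) atTop (𝓝 0) := by
    simpa [sub_eq_add_neg] using ((tendsto_const_nhds (x := 2 * M)).div_atTop
      (tendsto_atTop_add_const_right _ (-a) tendsto_id)).mul_const |y|
  refine squeeze_zero_norm' ?_ hdecay
  filter_upwards [eventually_gt_atTop a] with x hx using hbound x hx

theorem tendsto_add_mul_I_comap_re (y : ℝ) :
    Tendsto (fun x : ℝ => (x : ℂ) + y * I) atTop (comap re atTop) :=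
  tendsto_comap_iff.mpr <| tendsto_id.congr fun x => by simp

theorem eq_of_tendsto_sub_comp_im {g : ℂ → ℂ} {H : ℝ → ℂ} {C : ℝ}
    (hg : DifferentiableOn ℂ g {w | 0 < w.re}) (hH : ∀ y, ‖H y‖ ≤ C)
    (hlim : Tendsto (fun z => g z - H z.im) (comap re atTop) (𝓝 0)) (y : ℝ) : H y = H 0 := by
  obtain ⟨a, ha⟩ : ∃ a, ∀ z : ℂ, a ≤ z.re → ‖g z - H z.im‖ ≤ 1 := by
    have := (tendsto_zero_iff_norm_tendsto_zero.mp hlim).eventually (eventually_le_nhds one_pos)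
    rw [eventually_comap, eventually_atTop] at this
    obtain ⟨a, ha⟩ := this
    exact ⟨a, fun z hz => ha z.re hz z rfl⟩
  have hbdd : ∀ z : ℂ, max a 0 < z.re → ‖g z‖ ≤ C + 1 := fun z hz =>
    (norm_le_norm_add_norm_sub' (g z) (H z.im)).trans
      (add_le_add (hH _) (ha z ((le_max_left _ _).trans hz.le)))
  have hline : ∀ t : ℝ, Tendsto (fun x : ℝ => g (x + t * I)) atTop (𝓝 (H t)) := fun t => by
    simpa using (hlim.comp (tendsto_add_mul_I_comap_re t)).add_const (H t)
  have hshift := tendsto_sub_vertical_shift_of_bounded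
    (hg.mono fun w hw => (le_max_right a 0).trans_lt hw) hbdd y
  have h0 := hline 0
  simp only [ofReal_zero, zero_mul, add_zero] at h0
  exact sub_eq_zero.mp (tendsto_nhds_unique ((hline y).sub h0) hshift)

theorem exp_neg_mul_sub_mul_conj_mul_exp (μ ν : ℝ) (z : ℂ) :
    exp (-(μ : ℂ) * z - ν * starRingEnd ℂ z) * exp (↑(μ + ν) * z) =
      exp (↑(2 * ν) * z.im * I) := by
  rw [← exp_add]
  congr 1
  have hconj : z - starRingEnd ℂ z = ↑(2 * z.im) * I := sub_conj z
  push_cast at hconj ⊢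
  linear_combination (ν : ℂ) * hconj

noncomputable def levelSum (n : ℕ → ℕ) (μ ν : ℕ → ℕ → ℝ) (p : ℕ → ℕ → ℂ) (j : ℕ) (z : ℂ) :
    ℂ :=
  ∑ k ∈ range (n j + 1), p j k * exp (-(μ j k : ℂ) * z - (ν j k : ℂ) * (starRingEnd ℂ z))

section levelSum

variable {n : ℕ → ℕ} {μ ν : ℕ → ℕ → ℝ} {p : ℕ → ℕ → ℂ} {j : ℕ}

theorem partialSumAE_eq_add_levelSum (z : ℂ) :
    partialSumAE n μ ν p j z = ∑ i ∈ range j, levelSum n μ ν p i z + levelSum n μ ν p j z :=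
  sum_range_succ _ j

theorem differentiable_levelSum (hν : ∀ k ≤ n j, p j k ≠ 0 → ν j k = 0) :
    Differentiable ℂ (levelSum n μ ν p j) := by
  refine Differentiable.fun_sum fun k hk => ?_
  by_cases hp : p j k = 0
  · simp only [hp, zero_mul]
    exact differentiable_const 0
  · simp only [hν k (Nat.lt_succ_iff.mp (mem_range.mp hk)) hp, ofReal_zero, zero_mul, sub_zero]
    fun_prop

theorem levelSum_mul_exp {Λ : ℝ} (hμν : ∀ k ≤ n j, μ j k + ν j k = Λ) (z : ℂ) :
    levelSum n μ ν p j z * exp (Λ * z) =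
      ∑ k ∈ range (n j + 1), p j k * exp (↑(2 * ν j k) * z.im * I) := by
  rw [levelSum, sum_mul]
  refine sum_congr rfl fun k hk => ?_
  rw [mul_assoc, ← hμν k (Nat.lt_succ_iff.mp (mem_range.mp hk)),
    exp_neg_mul_sub_mul_conj_mul_exp]

theorem tendsto_sub_levelSum_mul_exp {f : ℂ → ℂ} {Λ : ℝ} (hμν : ∀ k ≤ n j, μ j k + ν j k = Λ)
    (hrem : Tendsto (fun z => ‖f z - partialSumAE n μ ν p j z‖ * Real.exp (Λ * z.re))
      (comap re atTop) (𝓝 0)) :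
    Tendsto (fun z => (f z - ∑ i ∈ range j, levelSum n μ ν p i z) * exp (Λ * z)
      - ∑ k ∈ range (n j + 1), p j k * exp (↑(2 * ν j k) * z.im * I))
      (comap re atTop) (𝓝 0) := by
  have hrewrite : ∀ z, (f z - ∑ i ∈ range j, levelSum n μ ν p i z) * exp (Λ * z)
      - ∑ k ∈ range (n j + 1), p j k * exp (↑(2 * ν j k) * z.im * I)
      = (f z - partialSumAE n μ ν p j z) * exp (Λ * z) := fun z => by
    rw [← levelSum_mul_exp hμν, partialSumAE_eq_add_levelSum]
    ring
  simp_rw [hrewrite]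
  rw [tendsto_zero_iff_norm_tendsto_zero]
  simpa only [norm_mul, norm_exp, re_ofReal_mul] using hrem

end levelSum

/-- **Asymptotic expansions of holomorphic functions have no anti-holomorphic terms.**
If `f` is holomorphic on the right half-plane and has an asymptotic expansion (with
pairwise distinct exponent pairs within each level), then every term with a nonzero
coefficient has `ν j k = 0`. -/
theorem stmt_2 (f : ℂ → ℂ)
    (lam : ℕ → ℝ) (n : ℕ → ℕ) (μ ν : ℕ → ℕ → ℝ) (p : ℕ → ℕ → ℂ)
    (hf : DifferentiableOn ℂ f {z : ℂ | 0 < z.re})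
    (h : IsAsymptoticExpansion f lam n μ ν p)
    (hinj : ∀ j, Set.InjOn (fun k => (μ j k, ν j k)) {k | k ≤ n j}) :
    ∀ j k, k ≤ n j → p j k ≠ 0 → ν j k = 0 := by
  obtain ⟨-, -, -, hμν, hrem⟩ := h
  intro j
  induction j using Nat.strong_induction_on with
  | _ j IH =>
  intro k hk hpk
  by_contra hνk
  have hsum : ∀ l ≤ n j, μ j l + ν j l = lam j := fun l hl => (hμν j l hl).2.2
  have hlower : Differentiable ℂ fun z => ∑ i ∈ range j, levelSum n μ ν p i z :=
    Differentiable.fun_sum fun i hi => differentiable_levelSum (IH i (mem_range.mp hi))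
  have hexp : Differentiable ℂ fun z => exp (lam j * z) := by fun_prop
  have hconst := eq_of_tendsto_sub_comp_im
    ((hf.sub hlower.differentiableOn).mul hexp.differentiableOn)
    (norm_sum_mul_exp_le _ _ _) (tendsto_sub_levelSum_mul_exp hsum (hrem j))
  have hfreq := sum_filter_eq_zero_of_forall_sum_mul_exp_eq _ _ _ _ hconst
    (c₀ := 2 * ν j k) (mul_ne_zero two_ne_zero hνk)
  -- as `μ j l + ν j l = lam j`, `hinj` makes the frequencies `2 * ν j l` pairwise distinct
  refine hpk ((sum_eq_single_of_mem k ?_ fun l hl hlk => ?_).symm.trans hfreq)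
  · simp [Nat.lt_succ_iff.mpr hk]
  · simp only [mem_filter, mem_range, mul_eq_mul_left_iff, two_ne_zero, or_false] at hl
    refine absurd (hinj j (Nat.lt_succ_iff.mp hl.1) hk (Prod.ext ?_ hl.2)) hlk
    linarith [hsum l (Nat.lt_succ_iff.mp hl.1), hsum k hk]
end

section
/- Let φ be a function on the unit polydisk 𝔻^N having a (formal) Taylor series ∑_{j} ∑_{|k|+|m|=j} a_{km} z^k z̄^m at the origin. Fix α ∈ ℝ^N with all components positive and c ∈ 𝔻^N, and define s_c(ζ) = (c₁ e^{-α₁ ζ}, …, c_N e^{-α_N ζ}). Let {λ_j} be the ascending enumeration of all values ⟨α,k⟩ + ⟨α,m⟩ over multi-indices k, m. Then the function f_c = φ ∘ s_c on the right half-plane has the asymptotic expansion ∑_{j=0}^∞ (∑_{⟨α,k⟩+⟨α,m⟩ = λ_j} a_{km} c^k c̄^m e^{-⟨α,k⟩ζ - ⟨α,m⟩ζ̄}). -/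
/-!
Pick `ε > 0` below every `αᵢ` and `p` with `p ε > λₙ`. Since `‖s_c(ζ)‖ ≤ ‖c‖ e^{-ε Re ζ}` for
`Re ζ ≥ 0`, the Taylor remainder of order `p` composed with `s_c` is `o(e^{-p ε Re ζ})`, hence
`o(e^{-λₙ Re ζ})`. Along `s_c` the monomial `a_{km} z^k z̄^m` becomes
`a_{km} c^k c̄^m e^{-⟨α,k⟩ζ - ⟨α,m⟩ζ̄}`, of modulus `const · e^{-(⟨α,k⟩+⟨α,m⟩) Re ζ}`. The
monomials of level `≤ λₙ` all have degree `≤ p` and form the partial sum of the expansion; the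
finitely many remaining ones of degree `≤ p` have level `> λₙ` and are `o(e^{-λₙ Re ζ})`.
-/

open Filter Complex Asymptotics Topology

lemma isLittleO_exp_neg_mul_iff_tendsto {X E : Type*} [NormedAddCommGroup E] {l : Filter X}
    (f : X → E) (r : X → ℝ) (lam : ℝ) :
    f =o[l] (fun x => Real.exp (-lam * r x)) ↔
      Tendsto (fun x => ‖f x‖ * Real.exp (lam * r x)) l (𝓝 0) := by
  rw [← isLittleO_norm_left, isLittleO_iff_tendsto fun x h => absurd h (Real.exp_ne_zero _)]
  simp_rw [neg_mul, Real.exp_neg, div_inv_eq_mul]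

lemma isLittleO_exp_neg_mul_re {a b : ℝ} (hab : a < b) :
    (fun ζ : ℂ => Real.exp (-b * ζ.re)) =o[comap re atTop] fun ζ => Real.exp (-a * ζ.re) := by
  refine Real.isLittleO_exp_comp_exp_comp.2 ?_
  simp_rw [← sub_mul, neg_sub_neg]
  exact tendsto_comap.const_mul_atTop (sub_pos.2 hab)

lemma exists_pos_forall_le_of_forall_pos {ι : Type*} [Finite ι] {f : ι → ℝ}
    (hf : ∀ i, 0 < f i) : ∃ ε, 0 < ε ∧ ∀ i, ε ≤ f i :=
  ((eventually_mem_nhdsWithin (a := (0 : ℝ)) (s := Set.Ioi 0)).and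
    (nhdsWithin_le_nhds (eventually_all.2 fun i =>
      (eventually_lt_nhds (hf i)).mono fun _ => le_of_lt))).exists

section MultiIndex

def pairsOfTotalDegreeLE (ι : Type*) [Fintype ι] [DecidableEq ι] (p : ℕ) :
    Finset ((ι → ℕ) × (ι → ℕ)) :=
  (Fintype.piFinset (fun _ : ι => Finset.range (p + 1)) ×ˢ
    Fintype.piFinset (fun _ : ι => Finset.range (p + 1))).filter
      fun km => (∑ i, km.1 i) + (∑ i, km.2 i) ≤ p

variable {ι : Type*} [Fintype ι] [DecidableEq ι]

lemma mem_piFinset_range_of_sum_le {k : ι → ℕ} {p : ℕ} (h : ∑ i, k i ≤ p) :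
    k ∈ Fintype.piFinset (fun _ : ι => Finset.range (p + 1)) :=
  Fintype.mem_piFinset.2 fun i => Finset.mem_range_succ_iff.2 <|
    (Finset.single_le_sum (fun _ _ => Nat.zero_le _) (Finset.mem_univ i)).trans h

lemma mem_pairsOfTotalDegreeLE {p : ℕ} {km : (ι → ℕ) × (ι → ℕ)} :
    km ∈ pairsOfTotalDegreeLE ι p ↔ (∑ i, km.1 i) + (∑ i, km.2 i) ≤ p := by
  refine ⟨fun h => (Finset.mem_filter.1 h).2, fun h => Finset.mem_filter.2 ⟨?_, h⟩⟩
  exact Finset.mem_product.2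
    ⟨mem_piFinset_range_of_sum_le (by omega), mem_piFinset_range_of_sum_le (by omega)⟩

lemma sum_range_sum_homogeneous_eq_sum_pairsOfTotalDegreeLE {M : Type*} [AddCommMonoid M]
    (p : ℕ) (v : (ι → ℕ) → (ι → ℕ) → M) :
    ∑ j ∈ Finset.range (p + 1),
      ∑ k ∈ Fintype.piFinset (fun _ : ι => Finset.range (j + 1)),
        ∑ m ∈ Fintype.piFinset (fun _ : ι => Finset.range (j + 1)),
          (if (∑ i, k i) + (∑ i, m i) = j then v k m else 0)
      = ∑ km ∈ pairsOfTotalDegreeLE ι p, v km.1 km.2 := by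
  rw [← Finset.sum_fiberwise_of_maps_to (g := fun km => (∑ i, km.1 i) + (∑ i, km.2 i))
    (t := Finset.range (p + 1))
    fun km hkm => Finset.mem_range_succ_iff.2 (mem_pairsOfTotalDegreeLE.1 hkm)]
  refine Finset.sum_congr rfl fun j hj => ?_
  rw [← Finset.sum_product' (f := fun k m => if (∑ i, k i) + (∑ i, m i) = j then v k m else 0),
    ← Finset.sum_filter]
  refine Finset.sum_congr (Finset.ext fun km => ?_) fun _ _ => rfl
  have hjp := Finset.mem_range_succ_iff.1 hj
  simp only [Finset.mem_filter, Finset.mem_product, mem_pairsOfTotalDegreeLE]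
  constructor
  · rintro ⟨-, hdeg⟩
    exact ⟨hdeg ▸ hjp, hdeg⟩
  · rintro ⟨-, hdeg⟩
    exact ⟨⟨mem_piFinset_range_of_sum_le (by omega), mem_piFinset_range_of_sum_le (by omega)⟩, hdeg⟩

end MultiIndex

noncomputable section ExpCurve

variable {ι : Type*}

/-- The curve `s_c` of the paper. -/
def expCurve (α : ι → ℝ) (c : ι → ℂ) (ζ : ℂ) : ι → ℂ :=
  fun i => c i * exp (-(α i : ℂ) * ζ)

lemma conj_expCurve_apply (α : ι → ℝ) (c : ι → ℂ) (ζ : ℂ) (i : ι) :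
    starRingEnd ℂ (expCurve α c ζ i)
      = expCurve α (fun i => starRingEnd ℂ (c i)) (starRingEnd ℂ ζ) i := by
  simp [expCurve, ← exp_conj]

lemma norm_expCurve_apply (α : ι → ℝ) (c : ι → ℂ) (ζ : ℂ) (i : ι) :
    ‖expCurve α c ζ i‖ = ‖c i‖ * Real.exp (-α i * ζ.re) := by
  simp [expCurve, norm_exp]

variable [Fintype ι]

lemma prod_expCurve_pow (α : ι → ℝ) (c : ι → ℂ) (k : ι → ℕ) (ζ : ℂ) :
    ∏ i, expCurve α c ζ i ^ k i
      = (∏ i, c i ^ k i) * exp (-((∑ i, α i * k i : ℝ) : ℂ) * ζ) := by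
  simp_rw [expCurve, mul_pow, Finset.prod_mul_distrib, ← exp_nat_mul, ← exp_sum]
  push_cast
  rw [neg_mul, Finset.sum_mul, ← Finset.sum_neg_distrib]
  exact congrArg _ (congrArg _ (Finset.sum_congr rfl fun i _ => by ring))

def expansionTerm (a : (ι → ℕ) → (ι → ℕ) → ℂ) (α : ι → ℝ) (c : ι → ℂ)
    (km : (ι → ℕ) × (ι → ℕ)) (ζ : ℂ) : ℂ :=
  a km.1 km.2 * (∏ i, c i ^ km.1 i) * (∏ i, (starRingEnd ℂ (c i)) ^ km.2 i) *
    exp (-((∑ i, α i * km.1 i : ℝ) : ℂ) * ζ - ((∑ i, α i * km.2 i : ℝ) : ℂ) * starRingEnd ℂ ζ)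

lemma monomial_expCurve (a : (ι → ℕ) → (ι → ℕ) → ℂ) (α : ι → ℝ) (c : ι → ℂ)
    (km : (ι → ℕ) × (ι → ℕ)) (ζ : ℂ) :
    a km.1 km.2 * (∏ i, expCurve α c ζ i ^ km.1 i) *
        (∏ i, starRingEnd ℂ (expCurve α c ζ i) ^ km.2 i)
      = expansionTerm a α c km ζ := by
  simp_rw [conj_expCurve_apply, prod_expCurve_pow, expansionTerm, sub_eq_add_neg, ← neg_mul,
    exp_add]
  ring

def taylorPolynomial [DecidableEq ι] (a : (ι → ℕ) → (ι → ℕ) → ℂ) (p : ℕ) (z : ι → ℂ) : ℂ :=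
  ∑ j ∈ Finset.range (p + 1),
    ∑ k ∈ Fintype.piFinset (fun _ : ι => Finset.range (j + 1)),
      ∑ m ∈ Fintype.piFinset (fun _ : ι => Finset.range (j + 1)),
        if (∑ i, k i) + (∑ i, m i) = j then
          a k m * (∏ i, z i ^ k i) * (∏ i, (starRingEnd ℂ (z i)) ^ m i)
        else 0

lemma taylorPolynomial_expCurve [DecidableEq ι] (a : (ι → ℕ) → (ι → ℕ) → ℂ) (p : ℕ)
    (α : ι → ℝ) (c : ι → ℂ) (ζ : ℂ) :
    taylorPolynomial a p (expCurve α c ζ)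
      = ∑ km ∈ pairsOfTotalDegreeLE ι p, expansionTerm a α c km ζ := by
  rw [taylorPolynomial, sum_range_sum_homogeneous_eq_sum_pairsOfTotalDegreeLE]
  exact Finset.sum_congr rfl fun km _ => monomial_expCurve a α c km ζ

lemma norm_expansionTerm (a : (ι → ℕ) → (ι → ℕ) → ℂ) (α : ι → ℝ) (c : ι → ℂ)
    (km : (ι → ℕ) × (ι → ℕ)) (ζ : ℂ) :
    ‖expansionTerm a α c km ζ‖ =
      ‖a km.1 km.2 * (∏ i, c i ^ km.1 i) * (∏ i, (starRingEnd ℂ (c i)) ^ km.2 i)‖ *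
      Real.exp (-((∑ i, α i * km.1 i) + (∑ i, α i * km.2 i)) * ζ.re) := by
  simp only [expansionTerm, norm_mul, norm_exp]
  congr 2
  simp
  ring

variable {α : ι → ℝ} {ε : ℝ}

lemma norm_expCurve_le (hεα : ∀ i, ε ≤ α i) (c : ι → ℂ) {ζ : ℂ} (hζ : 0 ≤ ζ.re) :
    ‖expCurve α c ζ‖ ≤ ‖c‖ * Real.exp (-ε * ζ.re) := by
  refine pi_norm_le_iff_of_nonneg (by positivity) |>.2 fun i => ?_
  rw [norm_expCurve_apply]
  gcongr
  · exact norm_le_pi_norm c i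
  · exact hεα i

lemma tendsto_expCurve (hε : 0 < ε) (hεα : ∀ i, ε ≤ α i) (c : ι → ℂ) :
    Tendsto (expCurve α c) (comap re atTop) (𝓝 0) := by
  have hdecay : Tendsto (fun ζ : ℂ => ‖c‖ * Real.exp (-ε * ζ.re)) (comap re atTop) (𝓝 0) := by
    simpa using (Real.tendsto_exp_atBot.comp
      (tendsto_comap.const_mul_atTop_of_neg (neg_lt_zero.2 hε))).const_mul ‖c‖
  refine squeeze_zero_norm' ?_ hdecay
  filter_upwards [tendsto_comap.eventually_ge_atTop 0] with ζ hζ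
  exact norm_expCurve_le hεα c hζ

lemma mul_totalDegree_le_level (hεα : ∀ i, ε ≤ α i) (km : (ι → ℕ) × (ι → ℕ)) :
    ε * (((∑ i, km.1 i) + (∑ i, km.2 i) : ℕ) : ℝ)
      ≤ (∑ i, α i * km.1 i) + (∑ i, α i * km.2 i) := by
  push_cast
  rw [mul_add, Finset.mul_sum, Finset.mul_sum]
  gcongr with i _ i _ <;> exact hεα i

lemma isLittleO_comp_expCurve {E : Type*} [NormedAddCommGroup E] {g : (ι → ℂ) → E} {p : ℕ}
    {lam : ℝ} (hε : 0 < ε) (hεα : ∀ i, ε ≤ α i) (c : ι → ℂ)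
    (hg : g =o[𝓝 0] fun z => ‖z‖ ^ p) (hlam : lam < p * ε) :
    (g ∘ expCurve α c) =o[comap re atTop] fun ζ => Real.exp (-lam * ζ.re) := by
  have hpow : (fun ζ => ‖expCurve α c ζ‖ ^ p) =O[comap re atTop]
      fun ζ => Real.exp (-(p * ε) * ζ.re) := by
    refine IsBigO.of_bound (‖c‖ ^ p) ?_
    filter_upwards [tendsto_comap.eventually_ge_atTop 0] with ζ hζ
    rw [Real.norm_of_nonneg (by positivity), Real.norm_of_nonneg (by positivity),
      show -(p * ε) * ζ.re = p * (-ε * ζ.re) by ring, Real.exp_nat_mul, ← mul_pow]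
    gcongr
    exact norm_expCurve_le hεα c hζ
  exact ((hg.comp_tendsto (tendsto_expCurve hε hεα c)).trans_isBigO hpow).trans
    (isLittleO_exp_neg_mul_re hlam)

lemma isBigO_expansionTerm {l : Filter ℂ} (a : (ι → ℕ) → (ι → ℕ) → ℂ) (c : ι → ℂ)
    (km : (ι → ℕ) × (ι → ℕ)) :
    expansionTerm a α c km =O[l]
      fun ζ => Real.exp (-((∑ i, α i * km.1 i) + (∑ i, α i * km.2 i)) * ζ.re) :=
  isBigO_of_le' _ fun ζ => by
    rw [norm_expansionTerm, Real.norm_of_nonneg (Real.exp_pos _).le]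

end ExpCurve

theorem stmt_9_general (N : ℕ) (φ : (Fin N → ℂ) → ℂ)
    (a : (Fin N → ℕ) → (Fin N → ℕ) → ℂ) (α : Fin N → ℝ) (c : Fin N → ℂ)
    (hα : ∀ i, 0 < α i)
    (hTaylor : ∀ n : ℕ,
      (fun z : Fin N → ℂ => φ z -
          ∑ j ∈ Finset.range (n + 1),
            ∑ k ∈ Fintype.piFinset (fun _ : Fin N => Finset.range (j + 1)),
              ∑ m ∈ Fintype.piFinset (fun _ : Fin N => Finset.range (j + 1)),
                if (∑ i, k i) + (∑ i, m i) = j then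
                  a k m * (∏ i, z i ^ k i) * (∏ i, (starRingEnd ℂ (z i)) ^ m i)
                else 0)
        =o[nhds (0 : Fin N → ℂ)] fun z => ‖z‖ ^ n)
    (lam : ℕ → ℝ) :
    ∀ n : ℕ, ∀ K : Finset ((Fin N → ℕ) × (Fin N → ℕ)),
      (∀ km : (Fin N → ℕ) × (Fin N → ℕ), km ∈ K ↔
        (∑ i, α i * km.1 i) + (∑ i, α i * km.2 i) ≤ lam n) →
      Filter.Tendsto
        (fun ζ : ℂ => ‖
            (φ (fun i => c i * Complex.exp (-(α i : ℂ) * ζ)) -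
              ∑ km ∈ K,
                a km.1 km.2 * (∏ i, c i ^ km.1 i) * (∏ i, (starRingEnd ℂ (c i)) ^ km.2 i) *
                  Complex.exp (-((∑ i, α i * km.1 i : ℝ) : ℂ) * ζ -
                    ((∑ i, α i * km.2 i : ℝ) : ℂ) * (starRingEnd ℂ ζ)))‖ *
          Real.exp (lam n * ζ.re))
        (Filter.comap Complex.re Filter.atTop) (nhds 0) := by
  intro n K hK
  obtain ⟨ε, hε, hεα⟩ := exists_pos_forall_le_of_forall_pos hα
  obtain ⟨p, hp⟩ : ∃ p : ℕ, lam n < p * ε := by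
    obtain ⟨p, hp⟩ := exists_nat_gt (lam n / ε)
    exact ⟨p, (div_lt_iff₀ hε).1 hp⟩
  have hKP : K ⊆ pairsOfTotalDegreeLE (Fin N) p := fun km hkm => by
    have hlt := (mul_totalDegree_le_level hεα km).trans ((hK km).1 hkm) |>.trans_lt hp
    rw [mul_comm] at hlt
    exact mem_pairsOfTotalDegreeLE.2 (Nat.cast_le.1 (lt_of_mul_lt_mul_right hlt hε.le).le)
  have hremainder := isLittleO_comp_expCurve (g := fun z => φ z - taylorPolynomial a p z)
    hε hεα c (hTaylor p) hp
  have hhigher : ∀ km ∈ pairsOfTotalDegreeLE (Fin N) p \ K,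
      expansionTerm a α c km =o[comap re atTop] fun ζ => Real.exp (-lam n * ζ.re) :=
    fun km hkm => (isBigO_expansionTerm a c km).trans_isLittleO <| isLittleO_exp_neg_mul_re <|
      not_le.1 fun h => (Finset.mem_sdiff.1 hkm).2 ((hK km).2 h)
  refine (isLittleO_exp_neg_mul_iff_tendsto
    (fun ζ => φ (expCurve α c ζ) - ∑ km ∈ K, expansionTerm a α c km ζ) re (lam n)).1 ?_
  refine (hremainder.add (IsLittleO.sum hhigher)).congr_left fun ζ => ?_
  simp only [Function.comp_apply, Finset.sum_apply, taylorPolynomial_expCurve,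
    ← Finset.sum_sdiff hKP]
  ring

/-- **Taylor series induce asymptotic expansions along exponential curves.**
Let `φ` be a function on the unit polydisk `𝔻^N` with formal Taylor series
`∑ a k m z^k z̄^m` at the origin, `α ∈ ℝ^N` with positive components, `c ∈ 𝔻^N`, and
`s_c(ζ) = (c₁ e^{-α₁ ζ}, …, c_N e^{-α_N ζ})`. If `lam` is the ascending enumeration of
all values `⟨α,k⟩ + ⟨α,m⟩`, then `f_c = φ ∘ s_c` has the asymptotic expansion
`∑_j (∑_{⟨α,k⟩+⟨α,m⟩ = lam j} a k m c^k c̄^m e^{-⟨α,k⟩ζ - ⟨α,m⟩ζ̄})` on the right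
half-plane; equivalently, for each `n` the sum of the terms of level `≤ lam n`
approximates `f_c` to order `o(e^{-lam n · Re ζ})`. -/
theorem stmt_9 (N : ℕ) (φ : (Fin N → ℂ) → ℂ)
    (a : (Fin N → ℕ) → (Fin N → ℕ) → ℂ) (α : Fin N → ℝ) (c : Fin N → ℂ)
    (hα : ∀ i, 0 < α i) (hc : ∀ i, ‖c i‖ < 1)
    (hTaylor : ∀ n : ℕ,
      (fun z : Fin N → ℂ => φ z -
          ∑ j ∈ Finset.range (n + 1),
            ∑ k ∈ Fintype.piFinset (fun _ : Fin N => Finset.range (j + 1)),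
              ∑ m ∈ Fintype.piFinset (fun _ : Fin N => Finset.range (j + 1)),
                if (∑ i, k i) + (∑ i, m i) = j then
                  a k m * (∏ i, z i ^ k i) * (∏ i, (starRingEnd ℂ (z i)) ^ m i)
                else 0)
        =o[nhds (0 : Fin N → ℂ)] fun z => ‖z‖ ^ n)
    (lam : ℕ → ℝ) (hmono : StrictMono lam)
    (hlam₁ : ∀ j : ℕ, ∃ k m : Fin N → ℕ,
      lam j = (∑ i, α i * k i) + (∑ i, α i * m i))
    (hlam₂ : ∀ k m : Fin N → ℕ, ∃ j : ℕ,
      lam j = (∑ i, α i * k i) + (∑ i, α i * m i)) :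
    ∀ n : ℕ, ∀ K : Finset ((Fin N → ℕ) × (Fin N → ℕ)),
      (∀ km : (Fin N → ℕ) × (Fin N → ℕ), km ∈ K ↔
        (∑ i, α i * km.1 i) + (∑ i, α i * km.2 i) ≤ lam n) →
      Filter.Tendsto
        (fun ζ : ℂ => ‖
            (φ (fun i => c i * Complex.exp (-(α i : ℂ) * ζ)) -
              ∑ km ∈ K,
                a km.1 km.2 * (∏ i, c i ^ km.1 i) * (∏ i, (starRingEnd ℂ (c i)) ^ km.2 i) *
                  Complex.exp (-((∑ i, α i * km.1 i : ℝ) : ℂ) * ζ -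
                    ((∑ i, α i * km.2 i : ℝ) : ℂ) * (starRingEnd ℂ ζ)))‖ *
          Real.exp (lam n * ζ.re))
        (Filter.comap Complex.re Filter.atTop) (nhds 0) :=
  stmt_9_general N φ a α c hα hTaylor lam
end

section
/- For the vector field F(z₁,z₂) = (z₁, -z₂) on ℂ², the function φ(z₁, z₂) = conj(z₁)·conj(z₂) is real-analytic, constant on every integral curve of F (hence F-holomorphic), has a Taylor series at the origin, but that Taylor series is anti-holomorphic and φ is not holomorphic. -/
/-!
Along the integral curve `ζ ↦ (c₁ e^ζ, c₂ e^{-ζ})` the product `z₁ z₂` is constant, hence so is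
its conjugate `φ = z̄₁ z̄₂`. This `φ` is its own Taylor polynomial from degree `2` on, a single
anti-holomorphic monomial. It is not holomorphic on any open set because, off the hyperplane
`z₂ = 0`, dividing by `z̄₂` along the line `z ↦ (z, z₂)` would make `z ↦ z̄` complex
differentiable, while its real derivative `conj` is not `ℂ`-linear.
-/

open Complex Asymptotics

theorem not_differentiableAt_conj (z : ℂ) : ¬ DifferentiableAt ℂ (starRingEnd ℂ) z := by
  intro h
  obtain ⟨g, hg⟩ := (differentiableAt_iff_restrictScalars ℝ conjCLE.differentiableAt).mp h
  rw [conjCLE.fderiv] at hg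
  have hg_apply (w : ℂ) : g w = starRingEnd ℂ w := congrArg (· w) hg
  have : -I = I := by simpa [hg_apply] using g.map_smul I 1
  exact I_ne_zero (by linear_combination -this / 2)

theorem not_differentiableAt_conj_mul_conj {q : ℂ × ℂ} (hq : q.2 ≠ 0) :
    ¬ DifferentiableAt ℂ (fun p : ℂ × ℂ => starRingEnd ℂ p.1 * starRingEnd ℂ p.2) q := by
  intro h
  have hline : DifferentiableAt ℂ (fun z : ℂ => starRingEnd ℂ z * starRingEnd ℂ q.2) q.1 :=
    h.comp (f := fun z : ℂ => (z, q.2)) q.1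
      (differentiableAt_id.prodMk (differentiableAt_const _))
  have hconj_q : starRingEnd ℂ q.2 ≠ 0 := (map_ne_zero _).mpr hq
  refine not_differentiableAt_conj q.1 ?_
  simpa [hconj_q] using hline.mul_const (starRingEnd ℂ q.2)⁻¹

theorem analyticOnNhd_conj_mul_conj :
    AnalyticOnNhd ℝ (fun p : ℂ × ℂ => starRingEnd ℂ p.1 * starRingEnd ℂ p.2) Set.univ := by
  have hconj_fst : AnalyticOnNhd ℝ (fun p : ℂ × ℂ => starRingEnd ℂ p.1) Set.univ := fun x _ ↦
    ((conjCLE : ℂ →L[ℝ] ℂ).comp (ContinuousLinearMap.fst ℝ ℂ ℂ)).analyticAt x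
  have hconj_snd : AnalyticOnNhd ℝ (fun p : ℂ × ℂ => starRingEnd ℂ p.2) Set.univ := fun x _ ↦
    ((conjCLE : ℂ →L[ℝ] ℂ).comp (ContinuousLinearMap.snd ℝ ℂ ℂ)).analyticAt x
  exact hconj_fst.mul hconj_snd

theorem conj_mul_conj_isBigO_norm_sq :
    (fun p : ℂ × ℂ => starRingEnd ℂ p.1 * starRingEnd ℂ p.2) =O[nhds 0] fun p => ‖p‖ ^ 2 := by
  refine IsBigO.of_bound 1 (Filter.Eventually.of_forall fun p ↦ ?_)
  calc ‖starRingEnd ℂ p.1 * starRingEnd ℂ p.2‖ = ‖p.1‖ * ‖p.2‖ := by simp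
    _ ≤ ‖p‖ * ‖p‖ := mul_le_mul (norm_fst_le p) (norm_snd_le p) (norm_nonneg _) (norm_nonneg _)
    _ = 1 * ‖‖p‖ ^ 2‖ := by simp [sq]

def conjMulConjCoeff (k₁ k₂ m₁ m₂ : ℕ) : ℂ :=
  if k₁ = 0 ∧ k₂ = 0 ∧ m₁ = 1 ∧ m₂ = 1 then 1 else 0

theorem taylorSum_conjMulConjCoeff (n : ℕ) (p : ℂ × ℂ) :
    (∑ k₁ ∈ Finset.range (n + 1), ∑ k₂ ∈ Finset.range (n + 1),
        ∑ m₁ ∈ Finset.range (n + 1), ∑ m₂ ∈ Finset.range (n + 1),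
          if k₁ + k₂ + m₁ + m₂ ≤ n then
            conjMulConjCoeff k₁ k₂ m₁ m₂ * p.1 ^ k₁ * p.2 ^ k₂ *
              (starRingEnd ℂ p.1) ^ m₁ * (starRingEnd ℂ p.2) ^ m₂
          else 0)
      = if 2 ≤ n then starRingEnd ℂ p.1 * starRingEnd ℂ p.2 else 0 := by
  have summand (k₁ k₂ m₁ m₂ : ℕ) :
      (if k₁ + k₂ + m₁ + m₂ ≤ n then
        conjMulConjCoeff k₁ k₂ m₁ m₂ * p.1 ^ k₁ * p.2 ^ k₂ *
          (starRingEnd ℂ p.1) ^ m₁ * (starRingEnd ℂ p.2) ^ m₂ else 0) =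
      if k₁ = 0 then if k₂ = 0 then if m₁ = 1 then if m₂ = 1 then
        (if 2 ≤ n then starRingEnd ℂ p.1 * starRingEnd ℂ p.2 else 0) else 0 else 0 else 0
      else 0 := by
    unfold conjMulConjCoeff
    split_ifs <;> simp_all
  simp only [summand, Finset.sum_ite_eq', Finset.mem_range, Finset.sum_ite_irrel,
    Finset.sum_const_zero]
  split_ifs <;> first | rfl | omega

/-- **Counterexample: opposite eigenvalues.** For the vector field
`F(z₁,z₂) = (z₁, -z₂)` on `ℂ²`, the function `φ(z₁,z₂) = conj z₁ · conj z₂` is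
real-analytic, constant on every integral curve `ζ ↦ (c₁ e^ζ, c₂ e^{-ζ})` of `F`
(hence `F`-holomorphic), has a Taylor series at the origin, but that Taylor series is
anti-holomorphic (all coefficients of terms containing a holomorphic variable vanish)
and `φ` is not holomorphic on any nonempty open set. -/
theorem stmt_18 (φ : ℂ × ℂ → ℂ)
    (hφ : φ = fun p : ℂ × ℂ => (starRingEnd ℂ p.1) * (starRingEnd ℂ p.2)) :
    AnalyticOn ℝ φ Set.univ ∧
    (∀ (c₁ c₂ : ℂ) (ζ : ℂ),
      φ (c₁ * Complex.exp ζ, c₂ * Complex.exp (-ζ)) = φ (c₁, c₂)) ∧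
    (∃ a : ℕ → ℕ → ℕ → ℕ → ℂ,
      (∀ n : ℕ,
        (fun p : ℂ × ℂ => φ p -
            ∑ k₁ ∈ Finset.range (n + 1), ∑ k₂ ∈ Finset.range (n + 1),
              ∑ m₁ ∈ Finset.range (n + 1), ∑ m₂ ∈ Finset.range (n + 1),
                if k₁ + k₂ + m₁ + m₂ ≤ n then
                  a k₁ k₂ m₁ m₂ * p.1 ^ k₁ * p.2 ^ k₂ *
                    (starRingEnd ℂ p.1) ^ m₁ * (starRingEnd ℂ p.2) ^ m₂
                else 0)
          =o[nhds (0 : ℂ × ℂ)] fun p => ‖p‖ ^ n) ∧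
      (∀ k₁ k₂ m₁ m₂ : ℕ, a k₁ k₂ m₁ m₂ ≠ 0 → k₁ = 0 ∧ k₂ = 0)) ∧
    (∀ U : Set (ℂ × ℂ), IsOpen U → U.Nonempty → ¬ DifferentiableOn ℂ φ U) := by
  subst hφ
  refine ⟨analyticOnNhd_conj_mul_conj.analyticOn, fun c₁ c₂ ζ ↦ ?_,
    ⟨conjMulConjCoeff, fun n ↦ ?_, fun k₁ k₂ m₁ m₂ h ↦ ?_⟩, fun U hU hne hdiff ↦ ?_⟩
  · have hexp : exp ζ * exp (-ζ) = 1 := by rw [← exp_add, add_neg_cancel, exp_zero]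
    dsimp only
    rw [← map_mul, ← map_mul, mul_mul_mul_comm, hexp, mul_one]
  · simp only [taylorSum_conjMulConjCoeff]
    rcases lt_or_ge n 2 with hn | hn
    · simpa [hn.not_ge] using conj_mul_conj_isBigO_norm_sq.trans_isLittleO
        (isLittleO_norm_pow_norm_pow hn)
    · simp [hn]
  · unfold conjMulConjCoeff at h
    grind
  · obtain ⟨q, hqU, hq⟩ : (U ∩ Set.univ ×ˢ {0}ᶜ).Nonempty :=
      (dense_univ.prod (dense_compl_singleton 0)).inter_open_nonempty U hU hne
    exact not_differentiableAt_conj_mul_conj hq.2 (hdiff.differentiableAt (hU.mem_nhds hqU))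
end
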